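/- arXiv:1501.07353 — 6 statements merged into one kernel-verified Lean document; each statement's English description precedes it below -/
import Mathlib

section
/- Suppose 𝔄 = {A_n}_{n≥1} is admissible, f is an m-ary 𝔄-operation, and U₁,…,U_m are 𝔄-ultrafilters. Then {X ∈ A_1 : f⁻¹[X] ∈ U₁ ⊗ ⋯ ⊗ U_m} is an 𝔄-ultrafilter. -/
/-- A field of sets over `S`: a nonempty collection of subsets of `S` closed under
finite unions, finite intersections and complementation. -/
def IsFieldOfSets {S : Type*} (A : Set (Set S)) : Prop :=
  A.Nonempty ∧ (∀ X ∈ A, ∀ Y ∈ A, X ∪ Y ∈ A) ∧ (∀ X ∈ A, ∀ Y ∈ A, X ∩ Y ∈ A) ∧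
    ∀ X ∈ A, Xᶜ ∈ A

/-- `U` is an ultrafilter on the field of sets `A`. -/
def IsUltraOn {S : Type*} (A U : Set (Set S)) : Prop :=
  U ⊆ A ∧ (∀ X ∈ U, ∀ Y ∈ U, X ∩ Y ∈ U) ∧ Set.univ ∈ U ∧ ∅ ∉ U ∧
    ∀ X ∈ A, X ∈ U ∨ Xᶜ ∈ U

/-- An admissible family `𝔄 = {A_n}_{n ≥ 1}` of fields of sets over `ω^n`:
each `A (n+1)` is a field of sets over `Fin (n+1) → ℕ`, the family is closed under
cyclic shifts `(a₁,…,aₙ) ↦ (a₂,…,aₙ,a₁)` of coordinates, and under slices obtained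
by fixing the first coordinate.  (The value `A 0` is irrelevant.) -/
def Adm (A : ∀ n : ℕ, Set (Set (Fin n → ℕ))) : Prop :=
  (∀ n : ℕ, IsFieldOfSets (A (n + 1))) ∧
  (∀ n : ℕ, ∀ X ∈ A (n + 2),
      (fun a : Fin (n + 2) → ℕ => Fin.snoc (Fin.tail a) (a 0)) '' X ∈ A (n + 2)) ∧
  (∀ n : ℕ, ∀ X ∈ A (n + 2), ∀ c : ℕ,
      {t : Fin (n + 1) → ℕ | (Fin.cons c t : Fin (n + 2) → ℕ) ∈ X} ∈ A (n + 1))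

/-- `U` is an `𝔄`-ultrafilter: an ultrafilter on `A 1` satisfying the Fubini property:
for every `n ≥ 1` and `X ∈ A (n+1)`,
`{(a₁,…,aₙ) : {a_{n+1} : (a₁,…,a_{n+1}) ∈ X} ∈ U} ∈ A n`. -/
def IsAUltra (A : ∀ n : ℕ, Set (Set (Fin n → ℕ))) (U : Set (Set (Fin 1 → ℕ))) : Prop :=
  IsUltraOn (A 1) U ∧
  ∀ n : ℕ, ∀ X ∈ A (n + 2),
    {a : Fin (n + 1) → ℕ |
      {t : Fin 1 → ℕ | (Fin.snoc a (t 0) : Fin (n + 2) → ℕ) ∈ X} ∈ U} ∈ A (n + 1)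

/-- The iterated Fubini product `U 0 ⊗ U 1 ⊗ ⋯ ⊗ U (m-1)`, an ultrafilter on `A m`:
`X` is in the product iff
`{(a₁,…,a_{m-1}) : {a_m : (a₁,…,a_m) ∈ X} ∈ U (m-1)}` is in the product of the
first `m - 1` ultrafilters. -/
def FProd (A : ∀ n : ℕ, Set (Set (Fin n → ℕ))) (U : ℕ → Set (Set (Fin 1 → ℕ))) :
    (m : ℕ) → Set (Set (Fin m → ℕ))
  | 0 => Set.univ
  | 1 => U 0
  | (m + 2) =>
    {X ∈ A (m + 2) |
      {a : Fin (m + 1) → ℕ |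
        {t : Fin 1 → ℕ | (Fin.snoc a (t 0) : Fin (m + 2) → ℕ) ∈ X} ∈ U (m + 1)}
        ∈ FProd A U (m + 1)}

/-- `f` is an (`m`-ary) `𝔄`-operation: for every `n ≥ 1` and `X ∈ A n`, the set
`{(a₁,…,a_{n+m-1}) : (a₁,…,a_{n-1}, f(a_n,…,a_{n+m-1})) ∈ X}` belongs to `A (n+m-1)`. -/
def IsAOp (A : ∀ n : ℕ, Set (Set (Fin n → ℕ))) {m : ℕ} (f : (Fin m → ℕ) → ℕ) : Prop :=
  ∀ p : ℕ, ∀ X ∈ A (p + 1),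
    {b : Fin (p + m) → ℕ |
      (Fin.snoc (fun i : Fin p => b (Fin.castAdd m i))
          (f (fun j : Fin m => b (Fin.natAdd p j))) : Fin (p + 1) → ℕ) ∈ X}
      ∈ A (p + m)

/-- `f_*^𝔄(U 0, …, U (m-1)) = {X ∈ A 1 : f⁻¹[X] ∈ U 0 ⊗ ⋯ ⊗ U (m-1)}`. -/
def fStar (A : ∀ n : ℕ, Set (Set (Fin n → ℕ))) (U : ℕ → Set (Set (Fin 1 → ℕ)))
    {m : ℕ} (f : (Fin m → ℕ) → ℕ) : Set (Set (Fin 1 → ℕ)) :=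
  {X ∈ A 1 | {x : Fin m → ℕ | (fun _ : Fin 1 => f x) ∈ X} ∈ FProd A U m}

section Aux

variable {A : ∀ n : ℕ, Set (Set (Fin n → ℕ))} {U : ℕ → Set (Set (Fin 1 → ℕ))}

lemma ultra_mono {S : Type*} {A₀ Uu : Set (Set S)} (h : IsUltraOn A₀ Uu)
    {X Y : Set S} (hX : X ∈ Uu) (hY : Y ∈ A₀) (hXY : X ⊆ Y) : Y ∈ Uu := by
  obtain ⟨hsub, hint, huniv, hemp, hult⟩ := h
  rcases hult Y hY with h1 | h1
  · exact h1
  · exfalso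
    have hm : X ∩ Yᶜ ∈ Uu := hint _ hX _ h1
    have he : X ∩ Yᶜ = ∅ := by
      ext z
      simp only [Set.mem_inter_iff, Set.mem_compl_iff, Set.mem_empty_iff_false, iff_false,
        not_and]
      intro hz hz'; exact hz' (hXY hz)
    rw [he] at hm; exact hemp hm

lemma ultra_compl_mem_iff {S : Type*} {A₀ Uu : Set (Set S)} (h : IsUltraOn A₀ Uu)
    {X : Set S} (hX : X ∈ A₀) : Xᶜ ∈ Uu ↔ X ∉ Uu := by
  obtain ⟨hsub, hint, huniv, hemp, hult⟩ := h
  constructor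
  · intro h1 h2
    have hm : X ∩ Xᶜ ∈ Uu := hint _ h2 _ h1
    rw [Set.inter_compl_self] at hm; exact hemp hm
  · intro h1
    rcases hult X hX with h2 | h2
    · exact absurd h2 h1
    · exact h2

lemma univ_memA (hA : Adm A) (n : ℕ) : (Set.univ : Set (Fin (n + 1) → ℕ)) ∈ A (n + 1) := by
  obtain ⟨⟨X, hX⟩, hun, hint, hcomp⟩ := hA.1 n
  have := hun X hX Xᶜ (hcomp X hX)
  rwa [Set.union_compl_self] at this

lemma empty_memA (hA : Adm A) (n : ℕ) : (∅ : Set (Fin (n + 1) → ℕ)) ∈ A (n + 1) := by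
  have := (hA.1 n).2.2.2 _ (univ_memA hA n)
  rwa [Set.compl_univ] at this

lemma memA_cast (A : ∀ n : ℕ, Set (Set (Fin n → ℕ))) {p q : ℕ} (h : p = q)
    {X : Set (Fin p → ℕ)} (hX : X ∈ A p) :
    {z : Fin q → ℕ | z ∘ Fin.cast h ∈ X} ∈ A q := by
  subst h
  have he : {z : Fin p → ℕ | z ∘ Fin.cast rfl ∈ X} = X := by
    ext z; simp [Fin.cast_refl]
  rwa [he]

end Aux
section Aux2

variable {A : ∀ n : ℕ, Set (Set (Fin n → ℕ))} {U : ℕ → Set (Set (Fin 1 → ℕ))}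

lemma sliceMem (hA : Adm A) :
    ∀ n k : ℕ, ∀ Y ∈ A (n + 1 + (k + 1)), ∀ a : Fin (n + 1) → ℕ,
      {x : Fin (k + 1) → ℕ | Fin.append a x ∈ Y} ∈ A (k + 1) := by
  intro n
  induction n with
  | zero =>
    intro k Y hY a
    have h : 0 + 1 + (k + 1) = k + 2 := by omega
    have hYc : {z : Fin (k + 2) → ℕ | z ∘ Fin.cast h ∈ Y} ∈ A (k + 2) := memA_cast A h hY
    have hs := hA.2.2 k _ hYc (a 0)
    convert hs using 1
    ext x
    simp only [Set.mem_setOf_eq]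
    rw [Fin.append_left_eq_cons]
  | succ n ih =>
    intro k Y hY a
    have h : n + 1 + 1 + (k + 1) = n + 1 + k + 1 + 1 := by omega
    have hYc : {z : Fin (n + 1 + k + 1 + 1) → ℕ | z ∘ Fin.cast h ∈ Y} ∈ A (n + 1 + k + 1 + 1) :=
      memA_cast A h hY
    have hsl := hA.2.2 (n + 1 + k) _ hYc (a 0)
    have hres := ih k _ hsl (Fin.tail a)
    convert hres using 1
    ext x
    simp only [Set.mem_setOf_eq]
    have key : Fin.append a x
        = Fin.cons (a 0) (Fin.append (Fin.tail a) x) ∘ Fin.cast h := by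
      conv_lhs => rw [← Fin.cons_self_tail a]
      rw [Fin.append_cons]
    rw [key]; exact Iff.rfl

lemma slice1Mem (hA : Adm A) (n : ℕ) {X : Set (Fin (n + 2) → ℕ)} (hX : X ∈ A (n + 2))
    (a : Fin (n + 1) → ℕ) :
    {t : Fin 1 → ℕ | (Fin.snoc a (t 0) : Fin (n + 2) → ℕ) ∈ X} ∈ A 1 := by
  have hs := sliceMem hA n 0 X hX a
  convert hs using 1
  ext t
  simp only [Set.mem_setOf_eq]
  rw [Fin.append_right_eq_snoc]

end Aux2
section Aux3

variable {A : ∀ n : ℕ, Set (Set (Fin n → ℕ))} {U : ℕ → Set (Set (Fin 1 → ℕ))}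

lemma mem_FProd_succ_succ {k : ℕ} {X : Set (Fin (k + 2) → ℕ)} :
    X ∈ FProd A U (k + 2) ↔ X ∈ A (k + 2) ∧
      {a : Fin (k + 1) → ℕ |
        {t : Fin 1 → ℕ | (Fin.snoc a (t 0) : Fin (k + 2) → ℕ) ∈ X} ∈ U (k + 1)}
        ∈ FProd A U (k + 1) := Iff.rfl

lemma FProd_one : FProd A U 1 = U 0 := rfl

lemma FProd_ultra (hA : Adm A) (hU : ∀ i, IsAUltra A (U i)) :
    ∀ k, IsUltraOn (A (k + 1)) (FProd A U (k + 1)) := by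
  intro k
  induction k with
  | zero => exact (hU 0).1
  | succ k ih =>
    have hU1 := (hU (k + 1)).1
    refine ⟨fun X hX => hX.1, ?_, ?_, ?_, ?_⟩
    · -- intersections
      rintro X ⟨hXA, hXP⟩ Y ⟨hYA, hYP⟩
      refine ⟨(hA.1 (k + 1)).2.2.1 X hXA Y hYA, ?_⟩
      have he : {a : Fin (k + 1) → ℕ |
          {t : Fin 1 → ℕ | (Fin.snoc a (t 0) : Fin (k + 2) → ℕ) ∈ X ∩ Y} ∈ U (k + 1)}
          = {a : Fin (k + 1) → ℕ |
              {t : Fin 1 → ℕ | (Fin.snoc a (t 0) : Fin (k + 2) → ℕ) ∈ X} ∈ U (k + 1)}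
            ∩ {a : Fin (k + 1) → ℕ |
              {t : Fin 1 → ℕ | (Fin.snoc a (t 0) : Fin (k + 2) → ℕ) ∈ Y} ∈ U (k + 1)} := by
        ext a
        simp only [Set.mem_setOf_eq, Set.mem_inter_iff]
        constructor
        · intro hm
          have hsub1 : {t : Fin 1 → ℕ | (Fin.snoc a (t 0) : Fin (k + 2) → ℕ) ∈ X ∩ Y}
              ⊆ {t : Fin 1 → ℕ | (Fin.snoc a (t 0) : Fin (k + 2) → ℕ) ∈ X} :=
            fun t ht => ht.1
          have hsub2 : {t : Fin 1 → ℕ | (Fin.snoc a (t 0) : Fin (k + 2) → ℕ) ∈ X ∩ Y}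
              ⊆ {t : Fin 1 → ℕ | (Fin.snoc a (t 0) : Fin (k + 2) → ℕ) ∈ Y} :=
            fun t ht => ht.2
          exact ⟨ultra_mono hU1 hm (slice1Mem hA k hXA a) hsub1,
                 ultra_mono hU1 hm (slice1Mem hA k hYA a) hsub2⟩
        · intro ⟨h1, h2⟩
          exact hU1.2.1 _ h1 _ h2
      rw [he]
      exact ih.2.1 _ hXP _ hYP
    · -- univ
      refine ⟨univ_memA hA (k + 1), ?_⟩
      have he : {a : Fin (k + 1) → ℕ |
          {t : Fin 1 → ℕ | (Fin.snoc a (t 0) : Fin (k + 2) → ℕ) ∈ (Set.univ : Set (Fin (k+2) → ℕ))} ∈ U (k + 1)}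
          = Set.univ := by
        ext a
        simp only [Set.mem_setOf_eq, Set.mem_univ, iff_true, Set.setOf_true]
        exact hU1.2.2.1
      rw [he]
      exact ih.2.2.1
    · -- empty
      rintro ⟨-, hP⟩
      have he : {a : Fin (k + 1) → ℕ |
          {t : Fin 1 → ℕ | (Fin.snoc a (t 0) : Fin (k + 2) → ℕ) ∈ (∅ : Set (Fin (k+2) → ℕ))} ∈ U (k + 1)}
          = ∅ := by
        ext a
        simp only [Set.mem_setOf_eq, Set.mem_empty_iff_false, Set.setOf_false, iff_false]
        exact hU1.2.2.2.1
      rw [he] at hP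
      exact ih.2.2.2.1 hP
    · -- ultra
      intro X hXA
      have hS : {a : Fin (k + 1) → ℕ |
          {t : Fin 1 → ℕ | (Fin.snoc a (t 0) : Fin (k + 2) → ℕ) ∈ X} ∈ U (k + 1)}
          ∈ A (k + 1) := (hU (k + 1)).2 k X hXA
      rcases ih.2.2.2.2 _ hS with h1 | h1
      · exact Or.inl ⟨hXA, h1⟩
      · refine Or.inr ⟨(hA.1 (k + 1)).2.2.2 X hXA, ?_⟩
        have he : {a : Fin (k + 1) → ℕ |
            {t : Fin 1 → ℕ | (Fin.snoc a (t 0) : Fin (k + 2) → ℕ) ∈ Xᶜ} ∈ U (k + 1)}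
            = {a : Fin (k + 1) → ℕ |
              {t : Fin 1 → ℕ | (Fin.snoc a (t 0) : Fin (k + 2) → ℕ) ∈ X} ∈ U (k + 1)}ᶜ := by
          ext a
          simp only [Set.mem_setOf_eq, Set.mem_compl_iff]
          have hc : {t : Fin 1 → ℕ | (Fin.snoc a (t 0) : Fin (k + 2) → ℕ) ∉ X}
              = {t : Fin 1 → ℕ | (Fin.snoc a (t 0) : Fin (k + 2) → ℕ) ∈ X}ᶜ := rfl
          rw [hc]
          exact ultra_compl_mem_iff hU1 (slice1Mem hA k hXA a)
        rw [he]
        exact h1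

end Aux3
section Aux4

variable {A : ∀ n : ℕ, Set (Set (Fin n → ℕ))} {U : ℕ → Set (Set (Fin 1 → ℕ))}

lemma fubiniProd (hA : Adm A) (hU : ∀ i, IsAUltra A (U i)) :
    ∀ k n : ℕ, ∀ Y ∈ A (n + 1 + (k + 1)),
      {a : Fin (n + 1) → ℕ |
        {x : Fin (k + 1) → ℕ | Fin.append a x ∈ Y} ∈ FProd A U (k + 1)} ∈ A (n + 1) := by
  intro k
  induction k with
  | zero =>
    intro n Y hY
    have hres := (hU 0).2 n Y hY
    convert hres using 1
    ext a
    simp only [Set.mem_setOf_eq]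
    have he : {x : Fin (0 + 1) → ℕ | Fin.append a x ∈ Y}
        = {t : Fin 1 → ℕ | (Fin.snoc a (t 0) : Fin (n + 2) → ℕ) ∈ Y} := by
      ext t
      simp only [Set.mem_setOf_eq, Fin.append_right_eq_snoc]
    rw [he]
    exact Iff.rfl
  | succ k ih =>
    intro n Y hY
    have hV := (hU (k + 1)).2 (n + 1 + k) Y hY
    have hres := ih n _ hV
    convert hres using 1
    ext a
    simp only [Set.mem_setOf_eq]
    have hZ : {x : Fin (k + 1 + 1) → ℕ | Fin.append a x ∈ Y} ∈ A (k + 2) :=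
      sliceMem hA n (k + 1) Y hY a
    have hsets : ∀ b : Fin (k + 1) → ℕ,
        {t : Fin 1 → ℕ |
          (Fin.snoc b (t 0) : Fin (k + 2) → ℕ) ∈ {x : Fin (k + 1 + 1) → ℕ | Fin.append a x ∈ Y}}
        = {t : Fin 1 → ℕ | Fin.snoc (Fin.append a b) (t 0) ∈ Y} := by
      intro b
      ext t
      simp only [Set.mem_setOf_eq]
      rw [← Fin.append_snoc]
    rw [mem_FProd_succ_succ]
    constructor
    · rintro ⟨-, h2⟩
      convert h2 using 2
      ext b
      simp only [Set.mem_setOf_eq, Fin.append_snoc]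
      exact Iff.rfl
    · intro h2
      refine ⟨hZ, ?_⟩
      convert h2 using 2
      ext b
      simp only [Set.mem_setOf_eq, Fin.append_snoc]
      exact Iff.rfl

end Aux4
section Main

variable {A : ∀ n : ℕ, Set (Set (Fin n → ℕ))} {U : ℕ → Set (Set (Fin 1 → ℕ))}

lemma gMem {m : ℕ} {f : (Fin (m + 1) → ℕ) → ℕ} (hf : IsAOp A f)
    {X : Set (Fin 1 → ℕ)} (hX : X ∈ A 1) :
    {x : Fin (m + 1) → ℕ | (fun _ : Fin 1 => f x) ∈ X} ∈ A (m + 1) := by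
  have h0 := hf 0 X hX
  have h : (0 : ℕ) + (m + 1) = m + 1 := by omega
  have hc := memA_cast A h h0
  convert hc using 1
  ext x
  simp only [Set.mem_setOf_eq, Function.comp]
  have e1 : (fun j : Fin (m + 1) => x (Fin.cast h (Fin.natAdd 0 j))) = x := by
    funext j
    congr 1
    ext
    simp
  have e2 : (Fin.snoc (fun i : Fin 0 => x (Fin.cast h (Fin.castAdd (m + 1) i))) (f x)
      : Fin 1 → ℕ) = fun _ : Fin 1 => f x := by
    funext t
    have ht : t = Fin.last 0 := Fin.ext (by omega)
    rw [ht]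
    exact Fin.snoc_last _ _
  rw [e1, e2]

theorem stmt7 (A : ∀ n : ℕ, Set (Set (Fin n → ℕ))) (hA : Adm A)
    (m : ℕ) (f : (Fin (m + 1) → ℕ) → ℕ) (hf : IsAOp A f)
    (U : ℕ → Set (Set (Fin 1 → ℕ))) (hU : ∀ i, IsAUltra A (U i)) :
    IsAUltra A (fStar A U f) := by
  have hP : IsUltraOn (A (m + 1)) (FProd A U (m + 1)) := FProd_ultra hA hU m
  constructor
  · -- ultrafilter on A 1
    refine ⟨fun X hX => hX.1, ?_, ?_, ?_, ?_⟩
    · rintro X ⟨hXA, hXP⟩ Y ⟨hYA, hYP⟩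
      refine ⟨(hA.1 0).2.2.1 X hXA Y hYA, ?_⟩
      have he : {x : Fin (m + 1) → ℕ | (fun _ : Fin 1 => f x) ∈ X ∩ Y}
          = {x : Fin (m + 1) → ℕ | (fun _ : Fin 1 => f x) ∈ X}
            ∩ {x : Fin (m + 1) → ℕ | (fun _ : Fin 1 => f x) ∈ Y} := rfl
      rw [he]
      exact hP.2.1 _ hXP _ hYP
    · refine ⟨univ_memA hA 0, ?_⟩
      have he : {x : Fin (m + 1) → ℕ | (fun _ : Fin 1 => f x) ∈ (Set.univ : Set (Fin 1 → ℕ))}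
          = Set.univ := by
        ext x; simp
      rw [he]
      exact hP.2.2.1
    · rintro ⟨-, hP0⟩
      have he : {x : Fin (m + 1) → ℕ | (fun _ : Fin 1 => f x) ∈ (∅ : Set (Fin 1 → ℕ))}
          = ∅ := by
        ext x; simp
      rw [he] at hP0
      exact hP.2.2.2.1 hP0
    · intro X hXA
      rcases hP.2.2.2.2 _ (gMem hf hXA) with h1 | h1
      · exact Or.inl ⟨hXA, h1⟩
      · refine Or.inr ⟨(hA.1 0).2.2.2 X hXA, ?_⟩
        have he : {x : Fin (m + 1) → ℕ | (fun _ : Fin 1 => f x) ∈ Xᶜ}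
            = {x : Fin (m + 1) → ℕ | (fun _ : Fin 1 => f x) ∈ X}ᶜ := rfl
        rw [he]
        exact h1
  · -- Fubini property
    intro n X hX
    have hW := hf (n + 1) X hX
    have hres := fubiniProd hA hU m n _ hW
    convert hres using 1
    ext a
    simp only [Set.mem_setOf_eq]
    have hset : {x : Fin (m + 1) → ℕ |
        (Fin.snoc (fun i : Fin (n + 1) => Fin.append a x (Fin.castAdd (m + 1) i))
          (f (fun j : Fin (m + 1) => Fin.append a x (Fin.natAdd (n + 1) j)))
            : Fin (n + 2) → ℕ) ∈ X}
        = {x : Fin (m + 1) → ℕ |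
            (fun _ : Fin 1 => f x) ∈
              {t : Fin 1 → ℕ | (Fin.snoc a (t 0) : Fin (n + 2) → ℕ) ∈ X}} := by
      ext x
      simp only [Set.mem_setOf_eq, Fin.append_left, Fin.append_right]
    constructor
    · rintro ⟨-, h2⟩
      rw [hset]
      exact h2
    · intro h2
      refine ⟨slice1Mem hA n hX a, ?_⟩
      rw [← hset]
      exact h2

end Main
end

section
/- Suppose 𝔄 = {A_n}_{n≥1} and 𝔅 = {B_n}_{n≥1} are admissible families with A_n ⊆ B_n for all n, and for each n, U_n is an 𝔄-ultrafilter, V_n is a 𝔅-ultrafilter, and U_n = V_n ∩ A_1. Then for every m ≥ 1, (U₁ ⊗ ⋯ ⊗ U_m)_𝔄 = (V₁ ⊗ ⋯ ⊗ V_m)_𝔅 ∩ A_m. Furthermore, if f is an m-ary operation on ω that is both an 𝔄-operation and a 𝔅-operation, then f_*^𝔄(U₁,…,U_m) = f_*^𝔅(V₁,…,V_m) ∩ A_1. -/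
lemma cons_snoc_tail {n : ℕ} (a : Fin (n + 1) → ℕ) (x : ℕ) :
    (Fin.cons (a 0) (Fin.snoc (Fin.tail a) x) : Fin (n + 2) → ℕ) = Fin.snoc a x := by
  rw [Fin.cons_snoc_eq_snoc_cons, Fin.cons_self_tail]

lemma slice_mem (A : ∀ n : ℕ, Set (Set (Fin n → ℕ))) (hA : Adm A) :
    ∀ n : ℕ, ∀ X ∈ A (n + 2), ∀ a : Fin (n + 1) → ℕ,
      {t : Fin 1 → ℕ | (Fin.snoc a (t 0) : Fin (n + 2) → ℕ) ∈ X} ∈ A 1 := by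
  intro n
  induction n with
  | zero =>
    intro X hX a
    have h := hA.2.2 0 X hX (a 0)
    convert h using 1
    ext t
    simp only [Set.mem_setOf_eq]
    rw [← cons_snoc_tail a (t 0)]
    have e : Fin.snoc (Fin.tail a) (t 0) = t := by
      funext i
      have hi : i = Fin.last 0 := Fin.ext (by omega)
      rw [hi, Fin.snoc_last]
      rfl
    rw [e]
  | succ n ih =>
    intro X hX a
    have hY := hA.2.2 (n + 1) X hX (a 0)
    have h := ih _ hY (Fin.tail a)
    convert h using 1
    ext t
    simp only [Set.mem_setOf_eq]
    rw [← cons_snoc_tail a (t 0)]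

lemma castA {n m : ℕ} (h : n = m) (A : ∀ p : ℕ, Set (Set (Fin p → ℕ)))
    (S : Set (Fin n → ℕ)) (hS : S ∈ A n) :
    {b : Fin m → ℕ | (fun i : Fin n => b (Fin.cast h i)) ∈ S} ∈ A m := by
  subst h
  exact hS

theorem stmt8 (A B : ∀ n : ℕ, Set (Set (Fin n → ℕ))) (hA : Adm A) (hB : Adm B)
    (hAB : ∀ n : ℕ, A (n + 1) ⊆ B (n + 1))
    (U V : ℕ → Set (Set (Fin 1 → ℕ)))
    (hU : ∀ i, IsAUltra A (U i)) (hV : ∀ i, IsAUltra B (V i))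
    (hUV : ∀ i, U i = V i ∩ A 1) :
    (∀ m : ℕ, FProd A U (m + 1) = FProd B V (m + 1) ∩ A (m + 1)) ∧
    ∀ (k : ℕ) (f : (Fin (k + 1) → ℕ) → ℕ), IsAOp A f → IsAOp B f →
      fStar A U f = fStar B V f ∩ A 1 := by
  have part1 : ∀ m : ℕ, FProd A U (m + 1) = FProd B V (m + 1) ∩ A (m + 1) := by
    intro m
    induction m with
    | zero => exact hUV 0
    | succ m ih =>
      ext X
      simp only [FProd, Set.mem_setOf_eq, Set.mem_inter_iff, Set.mem_sep_iff]
      have hsl : X ∈ A (m + 2) →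
          {a : Fin (m + 1) → ℕ |
            {t : Fin 1 → ℕ | (Fin.snoc a (t 0) : Fin (m + 2) → ℕ) ∈ X} ∈ U (m + 1)}
          = {a : Fin (m + 1) → ℕ |
            {t : Fin 1 → ℕ | (Fin.snoc a (t 0) : Fin (m + 2) → ℕ) ∈ X} ∈ V (m + 1)} := by
        intro hXA
        ext a
        simp only [Set.mem_setOf_eq, hUV (m + 1), Set.mem_inter_iff]
        exact ⟨fun h => h.1, fun h => ⟨h, slice_mem A hA m X hXA a⟩⟩
      constructor
      · rintro ⟨hXA, hsU⟩
        rw [ih] at hsU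
        refine ⟨⟨hAB _ hXA, ?_⟩, hXA⟩
        rw [← hsl hXA]
        exact hsU.1
      · rintro ⟨⟨hXB, hsV⟩, hXA⟩
        refine ⟨hXA, ?_⟩
        rw [ih]
        rw [← hsl hXA] at hsV
        exact ⟨hsV, (hU (m + 1)).2 m X hXA⟩
  refine ⟨part1, ?_⟩
  intro k f hfA hfB
  ext X
  simp only [fStar, Set.mem_setOf_eq, Set.mem_inter_iff, Set.mem_sep_iff]
  constructor
  · rintro ⟨hXA, hpre⟩
    rw [part1 k] at hpre
    exact ⟨⟨hAB 0 hXA, hpre.1⟩, hXA⟩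
  · rintro ⟨⟨hXB, hpre⟩, hXA⟩
    refine ⟨hXA, ?_⟩
    rw [part1 k]
    refine ⟨hpre, ?_⟩
    have h0 := hfA 0 X hXA
    have h1 := castA (Nat.zero_add (k + 1)) A _ h0
    convert h1 using 1
    ext b
    simp only [Set.mem_setOf_eq]
    have e1 : (fun j : Fin (k + 1) =>
        b (Fin.cast (Nat.zero_add (k + 1)) (Fin.natAdd 0 j))) = b := by
      funext j
      congr 1
      exact Fin.ext (Nat.zero_add _)
    have e2 : (Fin.snoc (fun i : Fin 0 => b (Fin.cast (Nat.zero_add (k + 1)) (Fin.castAdd (k + 1) i)))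
        (f (fun j : Fin (k + 1) => b (Fin.cast (Nat.zero_add (k + 1)) (Fin.natAdd 0 j))))
        : Fin 1 → ℕ) = fun _ : Fin 1 => f b := by
      funext t
      have ht : t = Fin.last 0 := Fin.ext (by omega)
      rw [ht, Fin.snoc_last, e1]
    rw [e2]
end

section
/- Suppose 𝔄 = {A_n}_{n≥1} is admissible and f is a binary associative 𝔄-operation. If U is an 𝔄-ultrafilter idempotent for f with respect to 𝔄, then for every X ∈ U there exists an infinite sequence a = ⟨a₀, a₁, a₂,…⟩ of natural numbers such that every finite reduction of a with respect to {f} (i.e., every f-product f(a_{i₁}, f(a_{i₂}, …, a_{i_k})…) over a finite increasing sequence of indices i₁ < i₂ < ⋯ < i_k) lies in X. -/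
/-- The Fubini product ultrafilter `U ⊗ V` on `A 2`:
`U ⊗ V = {Y ∈ A 2 : {a : {b : (a,b) ∈ Y} ∈ V} ∈ U}`. -/
def otimes2 (A : ∀ n : ℕ, Set (Set (Fin n → ℕ))) (U V : Set (Set (Fin 1 → ℕ))) :
    Set (Set (Fin 2 → ℕ)) :=
  {Y ∈ A 2 | {a : Fin 1 → ℕ |
      {b : Fin 1 → ℕ | (Fin.snoc a (b 0) : Fin 2 → ℕ) ∈ Y} ∈ V} ∈ U}

/-- For a binary operation `f` on `ω`, `f_*^𝔄(U,V) = {X ∈ A 1 : f⁻¹[X] ∈ U ⊗ V}`. -/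
def fStar2 (A : ∀ n : ℕ, Set (Set (Fin n → ℕ))) (f : ℕ → ℕ → ℕ)
    (U V : Set (Set (Fin 1 → ℕ))) : Set (Set (Fin 1 → ℕ)) :=
  {X ∈ A 1 | {x : Fin 2 → ℕ | (fun _ : Fin 1 => f (x 0) (x 1)) ∈ X} ∈ otimes2 A U V}

/-- `redList f a i l` is the `f`-product `f(a i, f(a j₁, f(a j₂, …)))` of the terms of
`a` along the indices `i :: l`. -/
def redList (f : ℕ → ℕ → ℕ) (a : ℕ → ℕ) : ℕ → List ℕ → ℕ
  | i, [] => a i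
  | i, j :: l => f (a i) (redList f a j l)

/-!
Idempotency of `U` says that for `Y ∈ U`, `U`-almost every `n` satisfies `f n ⁻¹' Y ∈ U`;
as `U` is an ultrafilter, some `n ∈ Y` does, and then `Y ∩ f n ⁻¹' Y ∈ U` again. Iterating
`Y ↦ Y ∩ f n ⁻¹' Y` from `X` gives a decreasing sequence `Yₖ ∈ U` with chosen `aₖ ∈ Yₖ`
and `f aₖ` mapping `Yₖ₊₁` into `Yₖ`, so every right-nested product along increasing indices
starting at `i` stays in `Yᵢ ⊆ X`.
-/

open Set

theorem redList_mem_of_chain {f : ℕ → ℕ → ℕ} {a : ℕ → ℕ} {Y : ℕ → Set ℕ} (hY : Antitone Y)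
    (ha : ∀ k, a k ∈ Y k) (hsucc : ∀ k, Y (k + 1) ⊆ f (a k) ⁻¹' Y k) :
    ∀ (l : List ℕ) (i : ℕ), List.IsChain (· < ·) (i :: l) → redList f a i l ∈ Y i
  | [], i, _ => ha i
  | j :: l, i, hc => by
    obtain ⟨hij, hcj⟩ := List.isChain_cons_cons.mp hc
    exact hsucc i (hY hij (redList_mem_of_chain hY ha hsucc l j hcj))

theorem exists_redList_mem {f : ℕ → ℕ → ℕ} {𝒰 : Set (Set ℕ)}
    (hstep : ∀ Y ∈ 𝒰, ∃ n ∈ Y, Y ∩ f n ⁻¹' Y ∈ 𝒰) {X : Set ℕ} (hX : X ∈ 𝒰) :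
    ∃ a : ℕ → ℕ, ∀ (i : ℕ) (l : List ℕ), List.IsChain (· < ·) (i :: l) → redList f a i l ∈ X := by
  choose! n hn hnext using hstep
  set Y : ℕ → Set ℕ := fun k => (fun Z => Z ∩ f (n Z) ⁻¹' Z)^[k] X
  have hsucc (k : ℕ) : Y (k + 1) = Y k ∩ f (n (Y k)) ⁻¹' Y k :=
    Function.iterate_succ_apply' _ _ _
  have hY𝒰 (k : ℕ) : Y k ∈ 𝒰 := by
    induction k with
    | zero => exact hX
    | succ k ih => rw [hsucc]; exact hnext _ ih
  have hanti : Antitone Y := antitone_nat_of_succ_le fun k => (hsucc k).le.trans inter_subset_left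
  refine ⟨fun k => n (Y k), fun i l hc => hanti (Nat.zero_le i) ?_⟩
  exact redList_mem_of_chain hanti (fun k => hn _ (hY𝒰 k))
    (fun k => (hsucc k).le.trans inter_subset_right) l i hc

section Ultrafilter

variable {A : ∀ n : ℕ, Set (Set (Fin n → ℕ))} {f : ℕ → ℕ → ℕ} {U : Set (Set (Fin 1 → ℕ))}

-- `Fin.snoc t (b 0) : Fin 2 → ℕ` evaluates definitionally to `t 0` at `0` and to `b 0` at `1`.
theorem setOf_preimage_mem_of_mem_fStar2 {V : Set (Set (Fin 1 → ℕ))} {Y : Set ℕ}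
    (hY : Function.eval 0 ⁻¹' Y ∈ fStar2 A f U V) :
    {t : Fin 1 → ℕ | Function.eval 0 ⁻¹' (f (t 0) ⁻¹' Y) ∈ V} ∈ U :=
  hY.2.2

theorem IsUltraOn.exists_mem_preimage_inter_mem (hU : IsUltraOn (A 1) U)
    (hidem : fStar2 A f U U = U) {Y : Set ℕ} (hY : Function.eval 0 ⁻¹' Y ∈ U) :
    ∃ n ∈ Y, Function.eval 0 ⁻¹' (Y ∩ f n ⁻¹' Y) ∈ U := by
  obtain ⟨-, hinter, -, hempty, -⟩ := hU
  have hgood := hinter _ hY _ (setOf_preimage_mem_of_mem_fStar2 (hidem.symm ▸ hY))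
  obtain ⟨t, htY, ht⟩ := nonempty_iff_ne_empty.mpr (ne_of_mem_of_not_mem hgood hempty)
  exact ⟨t 0, htY, hinter _ hY _ ht⟩

end Ultrafilter

theorem preimage_eval_zero_setOf_const_mem (X : Set (Fin 1 → ℕ)) :
    Function.eval 0 ⁻¹' {n : ℕ | (fun _ : Fin 1 => n) ∈ X} = X := by
  ext t
  simp only [mem_preimage, mem_ofPred_eq, Function.eval]
  rw [show (fun _ : Fin 1 => t 0) = t from funext fun i => congrArg t (Subsingleton.elim _ _)]

theorem stmt11_general (A : ∀ n : ℕ, Set (Set (Fin n → ℕ)))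
    (f : ℕ → ℕ → ℕ)
    (U : Set (Set (Fin 1 → ℕ))) (hU : IsAUltra A U)
    (hidem : fStar2 A f U U = U) :
    ∀ X ∈ U, ∃ a : ℕ → ℕ, ∀ (i : ℕ) (l : List ℕ), List.Chain (· < ·) i l →
      (fun _ : Fin 1 => redList f a i l) ∈ X := by
  intro X hX
  refine exists_redList_mem (𝒰 := {Y | Function.eval 0 ⁻¹' Y ∈ U})
    (X := {n | (fun _ => n) ∈ X}) (fun Y hY => hU.1.exists_mem_preimage_inter_mem hidem hY) ?_
  rwa [mem_ofPred_eq, preimage_eval_zero_setOf_const_mem]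

/-- If `U` is an `𝔄`-ultrafilter idempotent for the binary associative `𝔄`-operation
`f`, then every `X ∈ U` contains all finite reductions (`f`-products over finite
increasing sequences of indices) of some infinite sequence `a`. -/
theorem stmt11 (A : ∀ n : ℕ, Set (Set (Fin n → ℕ))) (hA : Adm A)
    (f : ℕ → ℕ → ℕ) (hassoc : ∀ a b c : ℕ, f (f a b) c = f a (f b c))
    (hf : IsAOp A (fun x : Fin 2 → ℕ => f (x 0) (x 1)))
    (U : Set (Set (Fin 1 → ℕ))) (hU : IsAUltra A U)
    (hidem : fStar2 A f U U = U) :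
    ∀ X ∈ U, ∃ a : ℕ → ℕ, ∀ (i : ℕ) (l : List ℕ), List.Chain (· < ·) i l →
      (fun _ : Fin 1 => redList f a i l) ∈ X :=
  stmt11_general A f U hU hidem
end

section
/- Suppose F is a countable collection of operations on ω and for each n ≥ 1, S_n is a countable collection of subsets of ω^n. Then there exists an admissible family 𝔄 = {A_n}_{n≥1} such that every operation in F is an 𝔄-operation and A_n is a countable field of sets over ω^n containing S_n for every n ≥ 1. -/
namespace Stmt12Aux

def sliceSet {n : ℕ} (c : ℕ) (Y : Set (Fin (n + 1) → ℕ)) : Set (Fin n → ℕ) :=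
  {t | (Fin.cons c t : Fin (n + 1) → ℕ) ∈ Y}

def shiftSet {n : ℕ} (X : Set (Fin (n + 1) → ℕ)) : Set (Fin (n + 1) → ℕ) :=
  (fun a : Fin (n + 1) → ℕ => Fin.snoc (Fin.tail a) (a 0)) '' X

def opSet {m : ℕ} (f : (Fin m → ℕ) → ℕ) (p : ℕ) (X : Set (Fin (p + 1) → ℕ)) :
    Set (Fin (p + m) → ℕ) :=
  {b | (Fin.snoc (fun i : Fin p => b (Fin.castAdd m i))
      (f (fun j : Fin m => b (Fin.natAdd p j))) : Fin (p + 1) → ℕ) ∈ X}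

variable (F : Set ((m : ℕ) × ((Fin (m + 1) → ℕ) → ℕ)))
variable (S : ∀ n : ℕ, Set (Set (Fin (n + 1) → ℕ)))

def base : ∀ n : ℕ, Set (Set (Fin n → ℕ))
  | 0 => ∅
  | (n + 1) => S n

def L : ℕ → ∀ n : ℕ, Set (Set (Fin n → ℕ))
  | 0, n => {Set.univ} ∪ Set.range (fun b : Fin n → ℕ => ({b} : Set (Fin n → ℕ))) ∪ base S n
  | (k + 1), 0 => L k 0
  | (k + 1), (n + 1) =>
      L k (n + 1)
      ∪ (⋃ X ∈ L k (n + 1), ⋃ Y ∈ L k (n + 1), {X ∪ Y})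
      ∪ (compl '' L k (n + 1))
      ∪ (shiftSet '' L k (n + 1))
      ∪ (⋃ c : ℕ, sliceSet c '' L k (n + 2))
      ∪ (⋃ op ∈ F, ⋃ p : ℕ, ⋃ h : p + (op.1 + 1) = n + 1,
          (fun Y : Set (Fin (p + 1) → ℕ) =>
            cast (congrArg (fun t => Set (Fin t → ℕ)) h) (opSet op.2 p Y)) '' L k (p + 1))

lemma L_mono_succ (k n : ℕ) : L F S k n ⊆ L F S (k + 1) n := by
  cases n with
  | zero => exact le_refl _
  | succ n =>
    intro X hX
    exact Or.inl (Or.inl (Or.inl (Or.inl (Or.inl hX))))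

lemma L_mono {k k' : ℕ} (h : k ≤ k') (n : ℕ) : L F S k n ⊆ L F S k' n := by
  induction h with
  | refl => exact le_refl _
  | step _ ih => exact ih.trans (L_mono_succ F S _ n)

lemma univ_mem (k n : ℕ) : (Set.univ : Set (Fin n → ℕ)) ∈ L F S k n :=
  L_mono F S (Nat.zero_le k) n (Or.inl (Or.inl rfl))

lemma singleton_mem (k n : ℕ) (b : Fin n → ℕ) : ({b} : Set (Fin n → ℕ)) ∈ L F S k n :=
  L_mono F S (Nat.zero_le k) n (Or.inl (Or.inr ⟨b, rfl⟩))

lemma base_mem {n : ℕ} {X : Set (Fin (n + 1) → ℕ)} (hX : X ∈ S n) (k : ℕ) :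
    X ∈ L F S k (n + 1) :=
  L_mono F S (Nat.zero_le k) (n + 1) (Or.inr hX)

lemma union_mem {k n : ℕ} {X Y : Set (Fin (n + 1) → ℕ)}
    (hX : X ∈ L F S k (n + 1)) (hY : Y ∈ L F S k (n + 1)) :
    X ∪ Y ∈ L F S (k + 1) (n + 1) := by
  refine Or.inl (Or.inl (Or.inl (Or.inl (Or.inr ?_))))
  simp only [Set.mem_iUnion]
  exact ⟨X, hX, Y, hY, rfl⟩

lemma compl_mem {k n : ℕ} {X : Set (Fin (n + 1) → ℕ)} (hX : X ∈ L F S k (n + 1)) :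
    Xᶜ ∈ L F S (k + 1) (n + 1) :=
  Or.inl (Or.inl (Or.inl (Or.inr ⟨X, hX, rfl⟩)))

lemma shift_mem {k n : ℕ} {X : Set (Fin (n + 1) → ℕ)} (hX : X ∈ L F S k (n + 1)) :
    shiftSet X ∈ L F S (k + 1) (n + 1) :=
  Or.inl (Or.inl (Or.inr ⟨X, hX, rfl⟩))

lemma slice_mem {k n : ℕ} {X : Set (Fin (n + 2) → ℕ)} (hX : X ∈ L F S k (n + 2)) (c : ℕ) :
    sliceSet c X ∈ L F S (k + 1) (n + 1) := by
  refine Or.inl (Or.inr ?_)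
  simp only [Set.mem_iUnion]
  exact ⟨c, X, hX, rfl⟩

lemma op_mem {k : ℕ} {op : (m : ℕ) × ((Fin (m + 1) → ℕ) → ℕ)} (hop : op ∈ F)
    {p : ℕ} {X : Set (Fin (p + 1) → ℕ)} (hX : X ∈ L F S k (p + 1)) :
    opSet op.2 p X ∈ L F S (k + 1) (p + (op.1 + 1)) := by
  show opSet op.2 p X ∈ L F S (k + 1) ((p + op.1) + 1)
  refine Or.inr ?_
  simp only [Set.mem_iUnion]
  refine ⟨op, hop, p, rfl, X, hX, ?_⟩
  rfl

lemma L_countable (hF : F.Countable) (hS : ∀ n, (S n).Countable) :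
    ∀ k n, (L F S k n).Countable := by
  intro k
  induction k with
  | zero =>
    intro n
    refine (Set.countable_singleton _ |>.union (Set.countable_range _)).union ?_
    cases n with
    | zero => exact Set.countable_empty
    | succ n => exact hS n
  | succ k ih =>
    intro n
    cases n with
    | zero => exact ih 0
    | succ n =>
      refine ((((((ih (n + 1)).union ?_).union ?_).union ?_).union ?_).union ?_)
      · exact (ih (n + 1)).biUnion fun X _ => (ih (n + 1)).biUnion fun Y _ =>
          Set.countable_singleton _
      · exact (ih (n + 1)).image _
      · exact (ih (n + 1)).image _
      · exact Set.countable_iUnion fun c => (ih (n + 2)).image _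
      · exact hF.biUnion fun op _ => Set.countable_iUnion fun p =>
          Set.countable_iUnion fun h => (ih (p + 1)).image _

end Stmt12Aux

open Stmt12Aux in
/-- Given a countable collection `F` of operations on `ω` (an `(m+1)`-ary operation is
a pair `⟨m, f⟩` with `f : (Fin (m+1) → ℕ) → ℕ`) and countable collections `S n` of
subsets of `ω^(n+1)`, there is an admissible family `A` of countable fields of sets
(containing all singletons) with `S n ⊆ A (n+1)` such that every operation in `F` is
an `A`-operation. -/
theorem stmt12 (F : Set ((m : ℕ) × ((Fin (m + 1) → ℕ) → ℕ))) (hF : F.Countable)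
    (S : ∀ n : ℕ, Set (Set (Fin (n + 1) → ℕ))) (hS : ∀ n, (S n).Countable) :
    ∃ A : ∀ n : ℕ, Set (Set (Fin n → ℕ)), Adm A ∧
      (∀ n : ℕ, (A (n + 1)).Countable) ∧
      (∀ n : ℕ, S n ⊆ A (n + 1)) ∧
      (∀ (n : ℕ) (b : Fin (n + 1) → ℕ), {b} ∈ A (n + 1)) ∧
      ∀ op ∈ F, IsAOp A op.2 := by
  refine ⟨fun n => ⋃ k, L F S k n, ?_, ?_, ?_, ?_, ?_⟩
  · -- Adm
    have memA : ∀ {n : ℕ} {X : Set (Fin n → ℕ)} (k : ℕ),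
        X ∈ L F S k n → X ∈ ⋃ k', L F S k' n := fun k h => Set.mem_iUnion.2 ⟨k, h⟩
    have getA : ∀ {n : ℕ} {X : Set (Fin n → ℕ)},
        X ∈ (⋃ k', L F S k' n) → ∃ k, X ∈ L F S k n := fun h => Set.mem_iUnion.1 h
    refine ⟨fun n => ⟨⟨Set.univ, memA 0 (univ_mem F S 0 _)⟩, ?_, ?_, ?_⟩, ?_, ?_⟩
    · -- union
      intro X hX Y hY
      obtain ⟨k1, hX⟩ := getA hX
      obtain ⟨k2, hY⟩ := getA hY
      exact memA (max k1 k2 + 1)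
        (union_mem F S (L_mono F S (le_max_left k1 k2) _ hX)
          (L_mono F S (le_max_right k1 k2) _ hY))
    · -- inter
      intro X hX Y hY
      obtain ⟨k1, hX⟩ := getA hX
      obtain ⟨k2, hY⟩ := getA hY
      have hXc := compl_mem F S (L_mono F S (le_max_left k1 k2) _ hX)
      have hYc := compl_mem F S (L_mono F S (le_max_right k1 k2) _ hY)
      have hu := union_mem F S hXc hYc
      have hc := compl_mem F S hu
      have : (Xᶜ ∪ Yᶜ)ᶜ = X ∩ Y := by simp [Set.compl_union]
      rw [this] at hc
      exact memA _ hc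
    · -- compl
      intro X hX
      obtain ⟨k, hX⟩ := getA hX
      exact memA (k + 1) (compl_mem F S hX)
    · -- shift
      intro n X hX
      obtain ⟨k, hX⟩ := getA hX
      exact memA (k + 1) (shift_mem F S hX)
    · -- slice
      intro n X hX c
      obtain ⟨k, hX⟩ := getA hX
      exact memA (k + 1) (slice_mem F S hX c)
  · -- countable
    intro n
    exact Set.countable_iUnion fun k => L_countable F S hF hS k (n + 1)
  · -- S n ⊆
    intro n X hX
    exact Set.mem_iUnion.2 ⟨0, base_mem F S hX 0⟩
  · -- singletons
    intro n b
    exact Set.mem_iUnion.2 ⟨0, singleton_mem F S 0 _ b⟩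
  · -- operations
    intro op hop
    intro p X hX
    obtain ⟨k, hX⟩ := Set.mem_iUnion.1 hX
    exact Set.mem_iUnion.2 ⟨k + 1, op_mem F S hop hX⟩
end

section
/- Suppose 𝔄 = {A_n}_{n≥1} is admissible, F is a collection of 𝔄-operations, and U is an 𝔄-ultrafilter which is strongly reductible for F. Then U is idempotent for F with respect to 𝔄, i.e., f_*^𝔄(U,…,U) = U for every f ∈ F. -/
/-- An operation on `ω` of arity `op.1`, represented as a function on lists
(its values on lists of length `op.1` are the relevant ones). -/
abbrev NatOp : Type := ℕ × (List ℕ → ℕ)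

/-- `toFun op` is `op` viewed as a genuine `op.1`-ary operation on `ω`. -/
def NatOp.toFun (op : NatOp) : (Fin op.1 → ℕ) → ℕ := fun x => op.2 (List.ofFn x)

/-- `applyOps [h₁,…,hₘ] l` splits `l` into consecutive blocks of lengths given by the
arities of the `hᵢ` and returns the list `[h₁(block₁), …, hₘ(blockₘ)]`. -/
def applyOps : List NatOp → List ℕ → List ℕ
  | [], _ => []
  | h :: hs, l => h.2 (l.take h.1) :: applyOps hs (l.drop h.1)

/-- The orderly terms over `F`: the smallest collection of operations on `ω` including
`F`, containing the (unary) identity, and closed under orderly composition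
`f(x̄₁,…,x̄ₙ) = g(h₁(x̄₁),…,hₙ(x̄ₙ))`. -/
inductive OrderlyTerm (F : Set NatOp) : NatOp → Prop where
  | base {op : NatOp} (h : op ∈ F) : OrderlyTerm F op
  | id : OrderlyTerm F (1, fun l => l.headI)
  | comp {g : NatOp} (hs : List NatOp) (hg : OrderlyTerm F g)
      (hhs : ∀ h ∈ hs, OrderlyTerm F h) (hlen : g.1 = hs.length) :
      OrderlyTerm F ((hs.map Prod.fst).sum, fun l => g.2 (applyOps hs l))

/-- `FRset F a`: the set of finite reductions of the infinite sequence `a` with respect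
to `F`, i.e. all values `f(a i₁, …, a iₘ)` of orderly terms `f` over `F` on finite
subsequences `a i₁, …, a iₘ` (with `i₁ < ⋯ < iₘ`) of `a`. -/
def FRset (F : Set NatOp) (a : ℕ → ℕ) : Set ℕ :=
  {z | ∃ op : NatOp, OrderlyTerm F op ∧
    ∃ l : List ℕ, l.Chain' (· < ·) ∧ l.length = op.1 ∧ op.2 (l.map a) = z}

/-- `b` is a reduction of `a` with respect to `F` (`b ≤_F a`): each `b n` is obtained by
applying an orderly term over `F` to a finite block of terms of `a`, the blocks being
disjoint, consecutive, and in increasing order of index. -/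
def IsReduction (F : Set NatOp) (b a : ℕ → ℕ) : Prop :=
  ∃ ops : ℕ → NatOp, ∃ idx : ℕ → List ℕ,
    (∀ n, OrderlyTerm F (ops n)) ∧
    (∀ n, (idx n).length = (ops n).1) ∧
    (∀ n, (idx n).Chain' (· < ·)) ∧
    (∀ n m : ℕ, n < m → ∀ x ∈ idx n, ∀ y ∈ idx m, x < y) ∧
    ∀ n, b n = (ops n).2 ((idx n).map a)

/-- `(ω, F)` is a Ramsey algebra: for every infinite sequence `a` and every `X ⊆ ω`
there is a reduction `b ≤_F a` with `FR_F(b) ⊆ X` or `FR_F(b) ∩ X = ∅`. -/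
def IsRamseyAlg (F : Set NatOp) : Prop :=
  ∀ (a : ℕ → ℕ) (X : Set ℕ), ∃ b : ℕ → ℕ, IsReduction F b a ∧
    (FRset F b ⊆ X ∨ Disjoint (FRset F b) X)

/-! If `X ∈ U`, strong reductibility yields `a` with `FR_F(a) ⊆ X` and `FR_F(a - i) ∈ U` for all
`i`. The tuples of finite reductions of `a` on successive blocks form a tree in which every node
has a `U`-large set of successors (the reductions of `a - i`, for `i` beyond the node's blocks),
so by the Fubini property every set of `A m` containing the `m`-tuples of this tree lies in
`U ⊗ ⋯ ⊗ U`. Composing with `f ∈ F` maps such tuples into `FR_F(a) ⊆ X`, hence `f⁻¹[X]` is in the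
product and `U ⊆ f_*(U,…,U)`. Equality follows since `U` is an ultrafilter on `A 1` and the
product has no two disjoint members. -/

namespace IsUltraOn

variable {S : Type*} {A U : Set (Set S)}

theorem mem_of_superset (hU : IsUltraOn A U) {X Y : Set S} (hX : X ∈ U) (hY : Y ∈ A)
    (hXY : X ⊆ Y) : Y ∈ U :=
  (hU.2.2.2.2 Y hY).resolve_right fun hYc => hU.2.2.2.1 <| by
    simpa only [← Set.sdiff_eq, Set.sdiff_eq_empty.mpr hXY] using hU.2.1 X hX Yᶜ hYc

theorem inter_nonempty (hU : IsUltraOn A U) {X Y : Set S} (hX : X ∈ U) (hY : Y ∈ U) :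
    (X ∩ Y).Nonempty :=
  Set.nonempty_iff_ne_empty.mpr fun h => hU.2.2.2.1 (h ▸ hU.2.1 X hX Y hY)

end IsUltraOn

theorem Fin.snoc_eq_cons_snoc_tail {n : ℕ} {α : Type*} (b : Fin (n + 1) → α) (z : α) :
    (Fin.snoc b z : Fin (n + 2) → α) = Fin.cons (b 0) (Fin.snoc (Fin.tail b) z) := by
  rw [Fin.cons_snoc_eq_snoc_cons, Fin.cons_self_tail]

theorem Fin.const_apply_zero_eq {α : Type*} (t : Fin 1 → α) : (fun _ : Fin 1 => t 0) = t :=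
  funext fun j => congrArg t (Subsingleton.elim 0 j)

section Fubini

variable {A : ∀ n : ℕ, Set (Set (Fin n → ℕ))} {U : Set (Set (Fin 1 → ℕ))}

theorem Adm.snoc_fiber_mem (hA : Adm A) :
    ∀ {n : ℕ} (Y : Set (Fin (n + 2) → ℕ)), Y ∈ A (n + 2) → ∀ b : Fin (n + 1) → ℕ,
      {t : Fin 1 → ℕ | (Fin.snoc b (t 0) : Fin (n + 2) → ℕ) ∈ Y} ∈ A 1
  | 0, Y, hY, b => by
    simpa only [Fin.snoc_eq_cons_snoc_tail, Fin.snoc_zero, Fin.const_apply_zero_eq]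
      using hA.2.2 0 Y hY (b 0)
  | n + 1, Y, hY, b => by
    simpa only [Fin.snoc_eq_cons_snoc_tail b, Set.mem_ofPred_eq]
      using hA.snoc_fiber_mem _ (hA.2.2 (n + 1) Y hY (b 0)) (Fin.tail b)

theorem IsAOp.preimage_mem {m : ℕ} {f : (Fin m → ℕ) → ℕ} (hf : IsAOp A f)
    {X : Set (Fin 1 → ℕ)} (hX : X ∈ A 1) :
    {x : Fin m → ℕ | (fun _ : Fin 1 => f x) ∈ X} ∈ A m := by
  -- `0 + m` is not definitionally `m`, so the case `p = 0` of `hf` is transported along `Fin.cast`.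
  have cast_mem : ∀ {k : ℕ} (e : 0 + m = k), ∀ Y ∈ A (0 + m),
      {x : Fin k → ℕ | (fun i => x (Fin.cast e i)) ∈ Y} ∈ A k := by
    rintro _ rfl Y hY
    exact hY
  convert cast_mem (Nat.zero_add m) _ (hf 0 X hX) using 3 with x
  simp only [Fin.snoc_zero, Set.mem_ofPred_eq]
  congr! with _ j
  exact Fin.ext (Nat.zero_add j).symm

theorem IsUltraOn.fprod_inter_nonempty (hU : IsUltraOn (A 1) U) :
    ∀ {k : ℕ} {Z W : Set (Fin (k + 1) → ℕ)}, Z ∈ FProd A (fun _ => U) (k + 1) →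
      W ∈ FProd A (fun _ => U) (k + 1) → (Z ∩ W).Nonempty
  | 0, _, _, hZ, hW => hU.inter_nonempty hZ hW
  | _ + 1, _, _, hZ, hW => by
    obtain ⟨b, hbZ, hbW⟩ := hU.fprod_inter_nonempty hZ.2 hW.2
    obtain ⟨t, htZ, htW⟩ := hU.inter_nonempty hbZ hbW
    exact ⟨_, htZ, htW⟩

theorem IsUltraOn.fStar_subset_of_subset_fStar (hU : IsUltraOn (A 1) U) {m : ℕ} (hm : m ≠ 0)
    {f : (Fin m → ℕ) → ℕ} (hsub : U ⊆ fStar A (fun _ => U) f) : fStar A (fun _ => U) f ⊆ U := by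
  obtain ⟨k, rfl⟩ := Nat.exists_eq_succ_of_ne_zero hm
  rintro X ⟨hXA, hX⟩
  refine (hU.2.2.2.2 X hXA).resolve_right fun hXc => ?_
  obtain ⟨x, hx, hxc⟩ := hU.fprod_inter_nonempty hX (hsub hXc).2
  exact hxc hx

theorem IsAUltra.mem_fprod_of_branching (hA : Adm A) (hU : IsAUltra A U)
    (G : ∀ k, Set (Fin k → ℕ)) (hG₀ : (G 0).Nonempty)
    (hG : ∀ k, ∀ b ∈ G k, ∃ S ∈ U, ∀ t ∈ S, (Fin.snoc b (t 0) : Fin (k + 1) → ℕ) ∈ G (k + 1)) :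
    ∀ k, ∀ Y ∈ A (k + 1), G (k + 1) ⊆ Y → Y ∈ FProd A (fun _ => U) (k + 1)
  | 0, Y, hY, hGY => by
    obtain ⟨b, hb⟩ := hG₀
    obtain ⟨S, hS, hSG⟩ := hG 0 b hb
    refine hU.1.mem_of_superset hS hY fun t ht => ?_
    simpa only [Fin.snoc_zero, Fin.const_apply_zero_eq] using hGY (hSG t ht)
  | k + 1, Y, hY, hGY => ⟨hY, hU.mem_fprod_of_branching hA G hG₀ hG k _ (hU.2 k Y hY)
      fun b hb => by
        obtain ⟨S, hS, hSG⟩ := hG (k + 1) b hb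
        exact hU.1.mem_of_superset hS (hA.snoc_fiber_mem Y hY b) fun t ht => hGY (hSG t ht)⟩

end Fubini

/-- The tuples `(f₀(a↾I₀), …, f_{k-1}(a↾I_{k-1}))` of orderly terms applied to `a` along index
lists `I₀, …, I_{k-1}` whose concatenation is strictly increasing. -/
def blockReductions (F : Set NatOp) (a : ℕ → ℕ) (k : ℕ) : Set (Fin k → ℕ) :=
  {x | ∃ ops : Fin k → NatOp, ∃ ls : Fin k → List ℕ,
    (∀ j, OrderlyTerm F (ops j)) ∧ (∀ j, (ls j).length = (ops j).1) ∧
    (List.ofFn ls).flatten.IsChain (· < ·) ∧ ∀ j, x j = (ops j).2 ((ls j).map a)}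

theorem List.IsChain.append_map_add {J l : List ℕ} {i : ℕ} (hJ : J.IsChain (· < ·))
    (hl : l.IsChain (· < ·)) (hJi : ∀ u ∈ J, u < i) :
    (J ++ l.map (· + i)).IsChain (· < ·) := by
  refine List.isChain_append.mpr ⟨hJ, (List.isChain_map _).mpr (hl.imp fun u v huv => ?_), ?_⟩
  · simpa using huv
  · intro x hx y hy
    obtain ⟨w, -, rfl⟩ := List.mem_map.mp (List.mem_of_mem_head? hy)
    exact (hJi x (List.mem_of_mem_getLast? hx)).trans_le (Nat.le_add_left i w)

theorem applyOps_ofFn_flatten {k : ℕ} (ops : Fin k → NatOp) (ls : Fin k → List ℕ)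
    (hlen : ∀ j, (ls j).length = (ops j).1) :
    applyOps (List.ofFn ops) (List.ofFn ls).flatten = List.ofFn fun j => (ops j).2 (ls j) := by
  induction k with
  | zero => simp [applyOps]
  | succ k ih =>
    rw [List.ofFn_succ, List.ofFn_succ, List.ofFn_succ, List.flatten_cons, applyOps,
      ← hlen 0, List.take_left, List.drop_left, ih _ _ fun j => hlen j.succ]

theorem blockReductions_zero_nonempty (F : Set NatOp) (a : ℕ → ℕ) :
    (blockReductions F a 0).Nonempty :=
  ⟨Fin.elim0, Fin.elim0, Fin.elim0, (·.elim0), (·.elim0), by simp, (·.elim0)⟩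

theorem exists_snoc_mem_blockReductions {F : Set NatOp} {a : ℕ → ℕ} {k : ℕ}
    {b : Fin k → ℕ} (hb : b ∈ blockReductions F a k) :
    ∃ i, ∀ z ∈ FRset F (fun j => a (j + i)),
      (Fin.snoc b z : Fin (k + 1) → ℕ) ∈ blockReductions F a (k + 1) := by
  obtain ⟨ops, ls, hops, hlen, hchain, hb⟩ := hb
  refine ⟨(List.ofFn ls).flatten.sum + 1, fun z ⟨op, hop, l, hl, hlen', hz⟩ => ?_⟩
  refine ⟨Fin.snoc ops op, Fin.snoc ls (l.map (· + ((List.ofFn ls).flatten.sum + 1))),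
    Fin.lastCases (by simpa using hop) (by simpa using hops),
    Fin.lastCases (by simpa using hlen') (by simpa using hlen), ?_,
    Fin.lastCases (by simpa [List.map_map, Function.comp_def] using hz.symm) (by simpa using hb)⟩
  rw [List.ofFn_succ']
  simp only [Fin.snoc_castSucc, Fin.snoc_last, List.concat_eq_append, List.flatten_append,
    List.flatten_cons, List.flatten_nil, List.append_nil]
  exact hchain.append_map_add hl fun u hu => Nat.lt_succ_of_le (List.le_sum_of_mem hu)

theorem NatOp.toFun_mem_FRset {F : Set NatOp} {op : NatOp} (hop : op ∈ F) {a : ℕ → ℕ}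
    {x : Fin op.1 → ℕ} (hx : x ∈ blockReductions F a op.1) : op.toFun x ∈ FRset F a := by
  obtain ⟨ops, ls, hops, hlen, hchain, hx⟩ := hx
  obtain rfl : x = fun j => (ops j).2 ((ls j).map a) := funext hx
  refine ⟨_, .comp (List.ofFn ops) (.base hop) (fun h hh => ?_) (by simp),
    (List.ofFn ls).flatten, hchain, ?_, ?_⟩
  · obtain ⟨j, rfl⟩ := List.mem_ofFn.mp hh
    exact hops j
  · simp only [List.length_flatten, List.map_ofFn]
    exact congrArg List.sum (congrArg List.ofFn (funext hlen))
  · simp only [List.map_flatten, List.map_ofFn]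
    rw [applyOps_ofFn_flatten ops (List.map a ∘ ls) (by simpa using hlen)]
    rfl

theorem IsAUltra.subset_fStar {A : ∀ n : ℕ, Set (Set (Fin n → ℕ))} (hA : Adm A)
    {U : Set (Set (Fin 1 → ℕ))} (hU : IsAUltra A U) {F : Set NatOp}
    (hsr : ∀ X ∈ U, ∃ a : ℕ → ℕ,
      (∀ z ∈ FRset F a, (fun _ : Fin 1 => z) ∈ X) ∧
      ∀ i : ℕ, {t : Fin 1 → ℕ | t 0 ∈ FRset F (fun j => a (j + i))} ∈ U)
    {m : ℕ} (hm : m ≠ 0) {f : (Fin m → ℕ) → ℕ} (hf : IsAOp A f)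
    (hfF : ∀ a, ∀ x ∈ blockReductions F a m, f x ∈ FRset F a) :
    U ⊆ fStar A (fun _ => U) f := by
  obtain ⟨k, rfl⟩ := Nat.exists_eq_succ_of_ne_zero hm
  intro X hX
  obtain ⟨a, hFRX, hshift⟩ := hsr X hX
  have hXA : X ∈ A 1 := hU.1.1 hX
  refine ⟨hXA, hU.mem_fprod_of_branching hA (blockReductions F a)
    (blockReductions_zero_nonempty F a) (fun _ b hb => ?_) k _ (hf.preimage_mem hXA)
    fun x hx => hFRX _ (hfF a x hx)⟩
  obtain ⟨i, hi⟩ := exists_snoc_mem_blockReductions hb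
  exact ⟨_, hshift i, fun t ht => hi (t 0) ht⟩

/-- A strongly reductible `𝔄`-ultrafilter is idempotent for `F` with respect to `𝔄`:
`f_*^𝔄(U,…,U) = U` for every `f ∈ F`. -/
theorem stmt14 (A : ∀ n : ℕ, Set (Set (Fin n → ℕ))) (hA : Adm A)
    (F : Set NatOp) (har : ∀ op ∈ F, 1 ≤ op.1)
    (hops : ∀ op ∈ F, IsAOp A op.toFun)
    (U : Set (Set (Fin 1 → ℕ))) (hU : IsAUltra A U)
    (hsr : ∀ X ∈ U, ∃ a : ℕ → ℕ,
      (∀ z ∈ FRset F a, (fun _ : Fin 1 => z) ∈ X) ∧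
      ∀ i : ℕ, {t : Fin 1 → ℕ | t 0 ∈ FRset F (fun j => a (j + i))} ∈ U) :
    ∀ op ∈ F, fStar A (fun _ => U) op.toFun = U := by
  intro op hop
  have harity : op.1 ≠ 0 := Nat.one_le_iff_ne_zero.mp (har op hop)
  have hsub : U ⊆ fStar A (fun _ => U) op.toFun :=
    hU.subset_fStar hA hsr harity (hops op hop) fun _ _ hx => NatOp.toFun_mem_FRset hop hx
  exact (hU.1.fStar_subset_of_subset_fStar harity hsub).antisymm hsub
end

section
/- Suppose (ω, F) is a Ramsey algebra. Then for every infinite sequence a in ω and every indexed collection {A_n}_{n∈ω} of subsets of ω, there exists an infinite sequence b which is a reduction of a with respect to F such that for each n ∈ ω, the set FR_F(b−n) of finite reductions of the tail b−n is either contained in or disjoint from A_n. -/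
/-!
Using the Ramsey property repeatedly, choose `a = c₀ ≥_F c₁ ≥_F c₂ ≥_F ⋯` with `FR_F(cₙ₊₁)`
homogeneous for `Aₙ`. A fusion argument produces `b` with `b − n ≤_F cₙ₊₁` for all `n`: take
`b n = c_{ℓ n}(j n)` with `ℓ` strictly increasing and the position `j n` so far out that the blocks
of this term inside each `c_k`, `k ≤ ℓ n`, lie beyond all blocks used for earlier terms. Since
finite reductions can only shrink under `≤_F`, `FR_F(b − n) ⊆ FR_F(cₙ₊₁)` is homogeneous for `Aₙ`.
-/

open Filter

section Reductions

variable {F : Set NatOp}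

def IsOrderlyValueOn (F : Set NatOp) (a : ℕ → ℕ) (l : List ℕ) (z : ℕ) : Prop :=
  ∃ op : NatOp, OrderlyTerm F op ∧ l.length = op.1 ∧ op.2 (l.map a) = z

structure IsReductionAlong (F : Set NatOp) (b a : ℕ → ℕ) (idx : ℕ → List ℕ) : Prop where
  pairwise : ∀ n, (idx n).Pairwise (· < ·)
  lt_of_lt : ∀ n m, n < m → ∀ x ∈ idx n, ∀ y ∈ idx m, x < y
  value : ∀ n, IsOrderlyValueOn F a (idx n) (b n)

theorem isReduction_iff {b a : ℕ → ℕ} :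
    IsReduction F b a ↔ ∃ idx, IsReductionAlong F b a idx := by
  constructor
  · rintro ⟨ops, idx, horderly, hlen, hchain, hlt, hval⟩
    exact ⟨idx, fun n => List.isChain_iff_pairwise.1 (hchain n), hlt,
      fun n => ⟨ops n, horderly n, hlen n, (hval n).symm⟩⟩
  · rintro ⟨idx, h⟩
    choose ops horderly hlen hval using h.value
    exact ⟨ops, idx, horderly, hlen, fun n => List.isChain_iff_pairwise.2 (h.pairwise n),
      h.lt_of_lt, fun n => (hval n).symm⟩

theorem mem_FRset_iff {a : ℕ → ℕ} {z : ℕ} :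
    z ∈ FRset F a ↔ ∃ l : List ℕ, l.Pairwise (· < ·) ∧ IsOrderlyValueOn F a l z := by
  constructor
  · rintro ⟨op, hop, l, hchain, hlen, hval⟩
    exact ⟨l, List.isChain_iff_pairwise.1 hchain, op, hop, hlen, hval⟩
  · rintro ⟨l, hl, op, hop, hlen, hval⟩
    exact ⟨op, hop, l, List.isChain_iff_pairwise.2 hl, hlen, hval⟩

theorem applyOps_map_flatMap {a b : ℕ → ℕ} {ops : ℕ → NatOp} {idx : ℕ → List ℕ}
    (hlen : ∀ n, (idx n).length = (ops n).1) (hval : ∀ n, (ops n).2 ((idx n).map a) = b n)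
    (l : List ℕ) : applyOps (l.map ops) ((l.flatMap idx).map a) = l.map b := by
  induction l with
  | nil => rfl
  | cons j l ih =>
    simp only [List.map_cons, List.flatMap_cons, List.map_append, applyOps]
    rw [List.take_left' (by simp [hlen j]), List.drop_left' (by simp [hlen j]), ih, hval j]

namespace IsReductionAlong

variable {c b a : ℕ → ℕ} {idx idx' : ℕ → List ℕ}

theorem isOrderlyValueOn_flatMap (h : IsReductionAlong F b a idx) {l : List ℕ} {z : ℕ}
    (hz : IsOrderlyValueOn F b l z) : IsOrderlyValueOn F a (l.flatMap idx) z := by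
  obtain ⟨op, hop, hlen, rfl⟩ := hz
  choose ops horderly hlens hval using h.value
  refine ⟨(((l.map ops).map Prod.fst).sum, fun t => op.2 (applyOps (l.map ops) t)),
    OrderlyTerm.comp _ hop ?_ (by simp [hlen]), ?_, ?_⟩
  · simp only [List.mem_map]
    rintro _ ⟨j, -, rfl⟩
    exact horderly j
  · simp [List.length_flatMap, hlens, Function.comp_def]
  · exact congrArg op.2 (applyOps_map_flatMap hlens hval l)

theorem pairwise_flatMap (h : IsReductionAlong F b a idx) {l : List ℕ}
    (hl : l.Pairwise (· < ·)) : (l.flatMap idx).Pairwise (· < ·) :=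
  List.pairwise_flatMap.2 ⟨fun n _ => h.pairwise n, hl.imp (h.lt_of_lt _ _)⟩

theorem refl (F : Set NatOp) (a : ℕ → ℕ) : IsReductionAlong F a a (fun n => [n]) where
  pairwise _ := List.pairwise_singleton _ _
  lt_of_lt _ _ hnm _ hx _ hy := by
    rw [List.mem_singleton] at hx hy
    exact hx ▸ hy ▸ hnm
  value _ := ⟨_, OrderlyTerm.id, rfl, rfl⟩

theorem trans (h₁ : IsReductionAlong F c b idx) (h₂ : IsReductionAlong F b a idx') :
    IsReductionAlong F c a (fun n => (idx n).flatMap idx') where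
  pairwise n := h₂.pairwise_flatMap (h₁.pairwise n)
  lt_of_lt n m hnm x hx y hy := by
    obtain ⟨i, hi, hxi⟩ := List.mem_flatMap.1 hx
    obtain ⟨i', hi', hyi'⟩ := List.mem_flatMap.1 hy
    exact h₂.lt_of_lt i i' (h₁.lt_of_lt n m hnm i hi i' hi') x hxi y hyi'
  value n := h₂.isOrderlyValueOn_flatMap (h₁.value n)

theorem eventually_notMem (h : IsReductionAlong F b a idx) (x : ℕ) :
    ∀ᶠ j in atTop, x ∉ idx j := by
  by_cases hx : ∃ j₀, x ∈ idx j₀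
  · obtain ⟨j₀, hj₀⟩ := hx
    filter_upwards [eventually_gt_atTop j₀] with j hj hxj
    exact lt_irrefl x (h.lt_of_lt j₀ j hj x hj₀ x hxj)
  · exact Eventually.of_forall (not_exists.1 hx)

theorem eventually_lt (h : IsReductionAlong F b a idx) (B : ℕ) :
    ∀ᶠ j in atTop, ∀ x ∈ idx j, B < x := by
  filter_upwards [(eventually_all_finset (Finset.range (B + 1))).2
    fun x _ => h.eventually_notMem x] with j hj x hx
  by_contra hle
  exact hj x (Finset.mem_range.2 (by omega)) hx

end IsReductionAlong

theorem IsReduction.refl (F : Set NatOp) (a : ℕ → ℕ) : IsReduction F a a :=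
  isReduction_iff.2 ⟨_, IsReductionAlong.refl F a⟩

theorem IsReduction.trans {c b a : ℕ → ℕ} (h₁ : IsReduction F c b) (h₂ : IsReduction F b a) :
    IsReduction F c a := by
  obtain ⟨idx, h₁⟩ := isReduction_iff.1 h₁
  obtain ⟨idx', h₂⟩ := isReduction_iff.1 h₂
  exact isReduction_iff.2 ⟨_, h₁.trans h₂⟩

theorem IsReduction.FRset_subset {b a : ℕ → ℕ} (h : IsReduction F b a) :
    FRset F b ⊆ FRset F a := by
  obtain ⟨idx, h⟩ := isReduction_iff.1 h
  intro z hz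
  obtain ⟨l, hl, hz⟩ := mem_FRset_iff.1 hz
  exact mem_FRset_iff.2 ⟨_, h.pairwise_flatMap hl, h.isOrderlyValueOn_flatMap hz⟩

theorem IsReduction.of_le {c : ℕ → ℕ → ℕ} (hc : ∀ n, IsReduction F (c (n + 1)) (c n))
    {k ℓ : ℕ} (hkℓ : k ≤ ℓ) : IsReduction F (c ℓ) (c k) := by
  induction ℓ, hkℓ using Nat.le_induction with
  | base => exact IsReduction.refl F (c k)
  | succ ℓ _ ih => exact (hc ℓ).trans ih

end Reductions

theorem exists_strictMono_finset_lt (U : ℕ → ℕ → Finset ℕ)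
    (hU : ∀ ℓ B, ∀ᶠ j in atTop, ∀ x ∈ U ℓ j, B < x) :
    ∃ ℓ j : ℕ → ℕ, StrictMono ℓ ∧
      ∀ m n, m < n → ∀ x ∈ U (ℓ m) (j m), ∀ y ∈ U (ℓ n) (j n), x < y := by
  obtain ⟨f, -, hf⟩ := exists_seq_of_forall_finset_exists (fun _ : ℕ × ℕ => True)
    (fun p q => p.1 < q.1 ∧ ∀ x ∈ U p.1 p.2, ∀ y ∈ U q.1 q.2, x < y) <| by
      intro s _
      obtain ⟨j, hj⟩ := (hU (s.sup Prod.fst + 1) (s.sup fun p => (U p.1 p.2).sup id)).exists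
      refine ⟨(s.sup Prod.fst + 1, j), trivial, fun p hp => ⟨?_, fun x hx y hy => ?_⟩⟩
      · exact Nat.lt_succ_of_le (Finset.le_sup (f := Prod.fst) hp)
      · refine lt_of_le_of_lt ?_ (hj y hy)
        exact (Finset.le_sup (f := id) hx).trans
          (Finset.le_sup (f := fun p : ℕ × ℕ => (U p.1 p.2).sup id) hp)
  exact ⟨fun n => (f n).1, fun n => (f n).2, fun m n hmn => (hf m n hmn).1,
    fun m n hmn => (hf m n hmn).2⟩

theorem exists_forall_tail_isReduction {F : Set NatOp} {c : ℕ → ℕ → ℕ}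
    (hc : ∀ n, IsReduction F (c (n + 1)) (c n)) :
    ∃ b : ℕ → ℕ, ∀ n, IsReduction F (fun i => b (i + n)) (c n) := by
  have hblk : ∀ k ℓ, ∃ idx, k ≤ ℓ → IsReductionAlong F (c ℓ) (c k) idx := fun k ℓ => by
    by_cases hkℓ : k ≤ ℓ
    · obtain ⟨idx, h⟩ := isReduction_iff.1 (IsReduction.of_le hc hkℓ)
      exact ⟨idx, fun _ => h⟩
    · exact ⟨fun _ => [], fun h => absurd h hkℓ⟩
  choose blk hblk using hblk
  -- all the blocks, inside every `c k` with `k ≤ ℓ`, of the term `c ℓ j`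
  let U : ℕ → ℕ → Finset ℕ := fun ℓ j =>
    (Finset.range (ℓ + 1)).biUnion fun k => (blk k ℓ j).toFinset
  have hU : ∀ ℓ B, ∀ᶠ j in atTop, ∀ x ∈ U ℓ j, B < x := fun ℓ B => by
    filter_upwards [(eventually_all_finset (Finset.range (ℓ + 1))).2 fun k hk =>
      (hblk k ℓ (Nat.lt_succ_iff.1 (Finset.mem_range.1 hk))).eventually_lt B] with j hj x hx
    obtain ⟨k, hk, hxk⟩ := Finset.mem_biUnion.1 hx
    exact hj k hk x (List.mem_toFinset.1 hxk)
  have mem_U : ∀ {k ℓ j x}, k ≤ ℓ → x ∈ blk k ℓ j → x ∈ U ℓ j := fun hkℓ hx =>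
    Finset.mem_biUnion.2 ⟨_, Finset.mem_range.2 (Nat.lt_succ_of_le hkℓ), List.mem_toFinset.2 hx⟩
  obtain ⟨ℓ, j, hℓ, hlt⟩ := exists_strictMono_finset_lt U hU
  have hkℓ : ∀ k i, k ≤ ℓ (i + k) := fun k i => (Nat.le_add_left k i).trans (hℓ.id_le _)
  refine ⟨fun n => c (ℓ n) (j n), fun k => isReduction_iff.2
    ⟨fun i => blk k (ℓ (i + k)) (j (i + k)), ⟨fun i => ?_, fun m n hmn x hx y hy => ?_, fun i => ?_⟩⟩⟩
  · exact (hblk k _ (hkℓ k i)).pairwise _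
  · exact hlt (m + k) (n + k) (by omega) x (mem_U (hkℓ k m) hx) y (mem_U (hkℓ k n) hy)
  · exact (hblk k _ (hkℓ k i)).value _

/-- Iterated Ramsey property: a single reduction handles countably many sets at once
(via tails). Here `b − n` is the sequence `fun i => b (i + n)`. -/
theorem stmt15 (F : Set NatOp) (hF : IsRamseyAlg F) (a : ℕ → ℕ) (As : ℕ → Set ℕ) :
    ∃ b : ℕ → ℕ, IsReduction F b a ∧
      ∀ n : ℕ, FRset F (fun i => b (i + n)) ⊆ As n ∨
        Disjoint (FRset F (fun i => b (i + n))) (As n) := by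
  choose R hRred hRhom using hF
  let c : ℕ → ℕ → ℕ := fun n => Nat.rec a (fun n x => R x (As n)) n
  obtain ⟨b, hb⟩ := exists_forall_tail_isReduction (c := fun n => c (n + 1))
    fun n => hRred (c (n + 1)) (As (n + 1))
  refine ⟨b, (hb 0).trans (hRred a (As 0)), fun n => ?_⟩
  have hsub := (hb n).FRset_subset
  rcases hRhom (c n) (As n) with h | h
  · exact Or.inl (hsub.trans h)
  · exact Or.inr (h.mono_left hsub)
end
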